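/- arXiv:1206.1897 — 2 statements merged into one kernel-verified Lean document; each statement's English description precedes it below -/
import Mathlib

section
/- Let k ≥ 2 be an integer and let D be a k-quasi-transitive digraph. If u is a (k+1)-king of D, then every vertex v with d(u,v) = k+1 is also a (k+1)-king of D. -/
variable {V : Type*}

/-- A directed path of length `n` from `u` to `v` in the digraph with arc relation `A`:
a sequence of `n + 1` pairwise distinct vertices, consecutive ones joined by arcs. -/
def HasPathN (A : V → V → Prop) (u v : V) (n : ℕ) : Prop :=
  ∃ f : Fin (n + 1) → V, Function.Injective f ∧ f 0 = u ∧ f (Fin.last n) = v ∧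
    ∀ i : Fin n, A (f i.castSucc) (f i.succ)

/-- The distance from `u` to `v`: the length of a shortest directed path from `u` to `v`,
`⊤` if there is no such path. -/
noncomputable def ddist (A : V → V → Prop) (u v : V) : ℕ∞ :=
  sInf {n : ℕ∞ | ∃ m : ℕ, n = (m : ℕ∞) ∧ HasPathN A u v m}

/-- `D` is `k`-quasi-transitive if for every directed path `(v_0, …, v_k)` of length `k`,
either `(v_0, v_k)` or `(v_k, v_0)` is an arc. -/
def KQuasiTrans (A : V → V → Prop) (k : ℕ) : Prop :=
  ∀ u v : V, HasPathN A u v k → A u v ∨ A v u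

/-- A vertex `v` is an `r`-king if every vertex is within distance `r` from `v`. -/
def IsRKing (A : V → V → Prop) (r : ℕ) (v : V) : Prop :=
  ∀ u : V, ddist A v u ≤ (r : ℕ∞)

/-- `u` reaches `v` by a directed path. -/
def Reaches (A : V → V → Prop) (u v : V) : Prop :=
  ∃ n : ℕ, HasPathN A u v n

/-- A strong component: the set of all vertices mutually reachable with some vertex. -/
def IsStrongComponent (A : V → V → Prop) (S : Set V) : Prop :=
  ∃ v : V, S = {u | Reaches A u v ∧ Reaches A v u}

/-- An initial strong component: a strong component receiving no arcs from outside. -/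
def IsInitialStrongComponent (A : V → V → Prop) (S : Set V) : Prop :=
  IsStrongComponent A S ∧ ∀ u v : V, u ∉ S → v ∈ S → ¬ A u v

/-- The out-degree of `v` in `D`. -/
noncomputable def outDeg (A : V → V → Prop) (v : V) : ℕ :=
  {u : V | A v u}.ncard

/-- The out-degree of `v` in the subdigraph of `D` induced by `C`. -/
noncomputable def outDegIn (A : V → V → Prop) (C : Set V) (v : V) : ℕ :=
  {u ∈ C | A v u}.ncard

/-- The maximum out-degree of the subdigraph induced by `C`. -/
noncomputable def maxOutDegIn (A : V → V → Prop) (C : Set V) : ℕ :=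
  sSup (outDegIn A C '' C)

/-!
Fix shortest paths `u = x₀, …, x_{k+1} = v` and `u = y₀, …, y_m = w` (`m ≤ k + 1`). In a
`k`-quasi-transitive digraph with `k ≥ 2`, two vertices at distance exactly `k` are joined by the
backward arc only. This gives `v → x₁`, `x_k → u`, `y_k → u` when `m ≥ k`, and `v → y₁` as soon
as `d(y₁, v) ≤ k`; in particular `d(v, x_i) ≤ i`, so `v` reaches `w` in `m` steps if the two paths
share a vertex `x_j = y_j` with `j ≥ 1`. Otherwise they meet only at `u`, and quasi-transitivity
applied to the paths of length `k` glued from pieces of them — `x_{m+1} ⋯ x_k u y₁ ⋯ y_m` when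
`m < k`; `y_k u x₁ ⋯ x_{k-1}` and then `y₃ ⋯ y_k x_{k-1} x_k v` when `m ≥ k ≥ 3`; a chain of paths
of length two when `k = 2` — always yields either a short route from `v` to `w` or `d(y₁, v) ≤ k`.
-/

section

variable {A : V → V → Prop} {a b c : V} {n : ℕ}

theorem hasPathN_iff : HasPathN A a b n ↔ ∃ x : ℕ → V, x 0 = a ∧ x n = b ∧
    (∀ i < n, A (x i) (x (i + 1))) ∧ Set.InjOn x (Set.Iic n) := by
  constructor
  · rintro ⟨f, hf, rfl, rfl, hA⟩
    refine ⟨fun i => f (Fin.clamp i n), rfl, ?_, fun i hi => ?_, fun i hi j hj h => ?_⟩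
    · simp [Fin.clamp, Fin.last]
    · convert hA ⟨i, hi⟩ using 2 <;> ext <;> simp [Fin.clamp] <;> omega
    · simpa [Fin.clamp, Nat.min_eq_left (Set.mem_Iic.1 hi), Nat.min_eq_left (Set.mem_Iic.1 hj)]
        using hf h
  · rintro ⟨x, rfl, rfl, hA, hx⟩
    exact ⟨fun i => x i,
      fun i j h => Fin.ext (hx (Nat.lt_succ_iff.1 i.2) (Nat.lt_succ_iff.1 j.2) h), rfl, rfl,
      fun i => hA i i.2⟩

theorem HasPathN.exists_hasPathN_of_adj (h : HasPathN A a b n) (hbc : A b c) :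
    ∃ m ≤ n + 1, HasPathN A a c m := by
  obtain ⟨x, rfl, rfl, hA, hx⟩ := hasPathN_iff.1 h
  by_cases hc : ∃ i ≤ n, x i = c
  · obtain ⟨i, hi, rfl⟩ := hc
    exact ⟨i, by omega, hasPathN_iff.2 ⟨x, rfl, rfl, fun j hj => hA j (by omega),
      hx.mono (Set.Iic_subset_Iic.2 hi)⟩⟩
  push Not at hc
  refine ⟨n + 1, le_rfl, hasPathN_iff.2 ⟨fun i => if i ≤ n then x i else c, by simp, by simp,
    fun i hi => ?_, fun i hi j hj h => ?_⟩⟩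
  · rcases Nat.lt_or_eq_of_le (Nat.lt_succ_iff.1 hi) with hi | rfl
    · simpa [hi.le, Nat.succ_le_of_lt hi] using hA i hi
    · simpa using hbc
  · simp only [Set.mem_Iic] at hi hj
    by_cases hin : i ≤ n <;> by_cases hjn : j ≤ n <;>
      simp only [hin, hjn, if_true, if_false] at h
    · exact hx hin hjn h
    · exact absurd h (hc i hin)
    · exact absurd h.symm (hc j hjn)
    · omega

theorem ddist_le_of_hasPathN (h : HasPathN A a b n) : ddist A a b ≤ n := sInf_le ⟨n, rfl, h⟩

theorem exists_hasPathN_of_ddist_ne_top (h : ddist A a b ≠ ⊤) :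
    ∃ n : ℕ, ddist A a b = n ∧ HasPathN A a b n := by
  have hne : {d : ℕ∞ | ∃ m : ℕ, d = m ∧ HasPathN A a b m}.Nonempty := by
    contrapose! h
    rw [ddist, h, sInf_empty]
  obtain ⟨n, hn, hp⟩ := csInf_mem hne
  exact ⟨n, hn, hp⟩

theorem exists_hasPathN_of_ddist_le (h : ddist A a b ≤ n) : ∃ m ≤ n, HasPathN A a b m := by
  obtain ⟨m, hm, hp⟩ :=
    exists_hasPathN_of_ddist_ne_top (ne_top_of_le_ne_top (ENat.natCast_ne_top n) h)
  exact ⟨m, by exact_mod_cast hm ▸ h, hp⟩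

theorem hasPathN_of_ddist_eq (h : ddist A a b = n) : HasPathN A a b n := by
  obtain ⟨m, hm, hp⟩ := exists_hasPathN_of_ddist_ne_top (h ▸ ENat.natCast_ne_top n)
  rwa [← Nat.cast_inj.1 (hm.symm.trans h)]

theorem le_ddist_of_forall (h : ∀ m : ℕ, ddist A a b ≤ m → n ≤ m) :
    (n : ℕ∞) ≤ ddist A a b := by
  induction hd : ddist A a b using ENat.recTopCoe with
  | top => exact le_top
  | coe d => exact Nat.cast_le.2 (h d hd.le)

theorem ddist_self_le (a : V) : ddist A a a ≤ 0 :=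
  ddist_le_of_hasPathN <|
    hasPathN_iff.2 ⟨fun _ => a, rfl, rfl, by simp, fun _ _ _ _ _ => by simp_all⟩

theorem ddist_le_succ_of_adj {p : ℕ} (h : ddist A a b ≤ p) (hbc : A b c) :
    ddist A a c ≤ (p + 1 : ℕ) := by
  obtain ⟨m, hm, hp⟩ := exists_hasPathN_of_ddist_le h
  obtain ⟨m', hm', hp'⟩ := hp.exists_hasPathN_of_adj hbc
  exact (ddist_le_of_hasPathN hp').trans (by exact_mod_cast (by omega : m' ≤ p + 1))

theorem ddist_le_one_of_adj (h : A a b) : ddist A a b ≤ 1 :=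
  ddist_le_succ_of_adj (ddist_self_le a) h

theorem ddist_le_add_of_walk {x : ℕ → V} {p s t : ℕ} (h : ddist A a (x s) ≤ p)
    (hA : ∀ r, s ≤ r → r < t → A (x r) (x (r + 1))) (hst : s ≤ t) :
    ddist A a (x t) ≤ (p + (t - s) : ℕ) := by
  induction t, hst using Nat.le_induction with
  | base => simpa using h
  | succ t hst ih =>
    have := ddist_le_succ_of_adj (ih fun r h₁ _ => hA r h₁ (by omega)) (hA t hst (by omega))
    rwa [show p + (t - s) + 1 = p + (t + 1 - s) by omega] at this

theorem ddist_le_of_le_of_le {p q : ℕ} (h₁ : ddist A a b ≤ p) (h₂ : ddist A b c ≤ q)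
    (hn : p + q ≤ n) : ddist A a c ≤ n := by
  obtain ⟨m, hm, hp⟩ := exists_hasPathN_of_ddist_le h₂
  obtain ⟨y, rfl, rfl, hA, -⟩ := hasPathN_iff.1 hp
  exact (ddist_le_add_of_walk h₁ (fun r _ hr => hA r hr) m.zero_le).trans
    (by exact_mod_cast (by omega : p + (m - 0) ≤ n))

def IsGeodesicOn (A : V → V → Prop) (x : ℕ → V) (i j : ℕ) : Prop :=
  (∀ t, i ≤ t → t < j → A (x t) (x (t + 1))) ∧ ddist A (x i) (x j) = (j - i : ℕ)

namespace IsGeodesicOn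

variable {x : ℕ → V} {i j s t : ℕ}

theorem ddist_le (hx : IsGeodesicOn A x i j) (his : i ≤ s) (hst : s ≤ t) (htj : t ≤ j) :
    ddist A (x s) (x t) ≤ (t - s : ℕ) := by
  simpa using ddist_le_add_of_walk (ddist_self_le (x s))
    (fun r h₁ h₂ => hx.1 r (by omega) (by omega)) hst

theorem le_of_ddist_le {m : ℕ} (hx : IsGeodesicOn A x i j) (his : i ≤ s) (hst : s ≤ t)
    (htj : t ≤ j) (h : ddist A (x s) (x t) ≤ m) : t - s ≤ m := by
  have hij := ddist_le_of_le_of_le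
    (ddist_le_of_le_of_le (hx.ddist_le le_rfl his (hst.trans htj)) h le_rfl)
    (hx.ddist_le (his.trans hst) htj le_rfl) le_rfl
  rw [hx.2, Nat.cast_le] at hij
  omega

theorem mono (hx : IsGeodesicOn A x i j) (his : i ≤ s) (hst : s ≤ t) (htj : t ≤ j) :
    IsGeodesicOn A x s t :=
  ⟨fun r h₁ h₂ => hx.1 r (by omega) (by omega), le_antisymm (hx.ddist_le his hst htj)
    (le_ddist_of_forall fun _ => hx.le_of_ddist_le his hst htj)⟩

theorem injOn (hx : IsGeodesicOn A x i j) : Set.InjOn x (Set.Icc i j) := by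
  intro s ⟨his, hsj⟩ t ⟨hit, htj⟩ h
  have hst := fun hs : s ≤ t =>
    hx.le_of_ddist_le his hs htj (m := 0) (by rw [h]; exact ddist_self_le _)
  have hts := fun ht : t ≤ s =>
    hx.le_of_ddist_le hit ht hsj (m := 0) (by rw [h]; exact ddist_self_le _)
  omega

theorem index_eq_of_eq {y : ℕ → V} {m n : ℕ} (hx : IsGeodesicOn A x 0 m)
    (hy : IsGeodesicOn A y 0 n) (h0 : x 0 = y 0) (hi : i ≤ m) (hj : j ≤ n) (h : x i = y j) :
    i = j := by
  have hji := hy.le_of_ddist_le le_rfl (Nat.zero_le j) hj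
    (h0 ▸ h ▸ hx.ddist_le le_rfl (Nat.zero_le i) hi)
  have hij := hx.le_of_ddist_le le_rfl (Nat.zero_le i) hi
    (h0 ▸ h ▸ hy.ddist_le le_rfl (Nat.zero_le j) hj)
  omega

end IsGeodesicOn

theorem exists_isGeodesicOn (h : ddist A a b = n) :
    ∃ x, IsGeodesicOn A x 0 n ∧ x 0 = a ∧ x n = b := by
  obtain ⟨x, rfl, rfl, hA, -⟩ := hasPathN_iff.1 (hasPathN_of_ddist_eq h)
  exact ⟨x, ⟨fun t _ ht => hA t ht, by simpa using h⟩, rfl, rfl⟩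

theorem exists_isGeodesicOn_of_ddist_le (h : ddist A a b ≤ n) :
    ∃ m ≤ n, ∃ x, IsGeodesicOn A x 0 m ∧ x 0 = a ∧ x m = b := by
  obtain ⟨m, hm, -⟩ :=
    exists_hasPathN_of_ddist_ne_top (ne_top_of_le_ne_top (ENat.natCast_ne_top n) h)
  exact ⟨m, by exact_mod_cast hm ▸ h, exists_isGeodesicOn hm⟩

theorem IsGeodesicOn.hasPathN_append {x y : ℕ → V} {i j s t : ℕ}
    (hx : IsGeodesicOn A x i j) (hy : IsGeodesicOn A y s t) (hij : i ≤ j) (hst : s ≤ t)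
    (hn : j - i + 1 + (t - s) = n)
    (hxy : A (x j) (y s))
    (hdisj : ∀ i' s', i ≤ i' → i' ≤ j → s ≤ s' → s' ≤ t → x i' ≠ y s') :
    HasPathN A (x i) (y t) n := by
  let z : ℕ → V := fun r => if r ≤ j - i then x (i + r) else y (s + (r - (j - i + 1)))
  have hz₁ : ∀ r ≤ j - i, z r = x (i + r) := fun r hr => if_pos hr
  have hz₂ : ∀ r, j - i < r → z r = y (s + (r - (j - i + 1))) := fun r hr => if_neg (by omega)
  have hzn : z n = y t := by rw [hz₂ n (by omega)]; congr 1; omega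
  refine hasPathN_iff.2 ⟨z, by simp [z], hzn, fun r hr => ?_, fun r hr r' hr' h => ?_⟩
  · rcases lt_trichotomy r (j - i) with hr' | rfl | hr'
    · rw [hz₁ r hr'.le, hz₁ (r + 1) hr']
      exact hx.1 (i + r) (by omega) (by omega)
    · rw [hz₁ _ le_rfl, hz₂ _ (by omega), show i + (j - i) = j by omega]
      simpa using hxy
    · rw [hz₂ r hr', hz₂ (r + 1) (by omega),
        show s + (r + 1 - (j - i + 1)) = s + (r - (j - i + 1)) + 1 by omega]
      exact hy.1 _ (by omega) (by omega)
  · simp only [Set.mem_Iic] at hr hr'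
    rcases le_or_gt r (j - i) with h₁ | h₁ <;> rcases le_or_gt r' (j - i) with h₂ | h₂
    · rw [hz₁ r h₁, hz₁ r' h₂] at h
      have := hx.injOn ⟨le_add_right le_rfl, by omega⟩ ⟨le_add_right le_rfl, by omega⟩ h
      omega
    · rw [hz₁ r h₁, hz₂ r' h₂] at h
      exact absurd h (hdisj _ _ (by omega) (by omega) (by omega) (by omega))
    · rw [hz₂ r h₁, hz₁ r' h₂] at h
      exact absurd h.symm (hdisj _ _ (by omega) (by omega) (by omega) (by omega))
    · rw [hz₂ r h₁, hz₂ r' h₂] at h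
      have := hy.injOn ⟨le_add_right le_rfl, by omega⟩ ⟨le_add_right le_rfl, by omega⟩ h
      omega

namespace KQuasiTrans

variable {k m : ℕ} {x y : ℕ → V}

theorem adj_of_ddist_eq (hqt : KQuasiTrans A k) (hk : 2 ≤ k) (h : ddist A a b = k) : A b a := by
  refine (hqt a b (hasPathN_of_ddist_eq h)).resolve_left fun hab => ?_
  have : (k : ℕ∞) ≤ 1 := h ▸ ddist_le_one_of_adj hab
  norm_cast at this
  omega

theorem adj_of_isGeodesicOn (hqt : KQuasiTrans A k) (hk : 2 ≤ k) {i j : ℕ}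
    (hx : IsGeodesicOn A x i j) (hij : j - i = k) : A (x j) (x i) :=
  hqt.adj_of_ddist_eq hk (hij ▸ hx.2)

theorem adj_of_ddist_le (hqt : KQuasiTrans A k) (hk : 2 ≤ k) (hx : IsGeodesicOn A x 0 (k + 1))
    (hc : A (x 0) c) (hcx : ddist A c (x (k + 1)) ≤ k) : A (x (k + 1)) c :=
  hqt.adj_of_ddist_eq hk <| le_antisymm hcx <| le_ddist_of_forall fun n hn => by
    have := hx.le_of_ddist_le le_rfl (Nat.zero_le _) le_rfl
      (ddist_le_of_le_of_le (ddist_le_one_of_adj hc) hn le_rfl)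
    omega

theorem ddist_last_le (hqt : KQuasiTrans A k) (hk : 2 ≤ k) (hx : IsGeodesicOn A x 0 (k + 1))
    {i : ℕ} (hi : 1 ≤ i) (hik : i ≤ k + 1) : ddist A (x (k + 1)) (x i) ≤ i := by
  have hx₁ : A (x (k + 1)) (x 1) :=
    hqt.adj_of_isGeodesicOn hk (hx.mono (Nat.zero_le 1) (by omega) le_rfl) (by omega)
  exact ddist_le_of_le_of_le (ddist_le_one_of_adj hx₁) (hx.ddist_le (Nat.zero_le 1) hi hik)
    (by omega)

theorem ddist_last_first_le (hqt : KQuasiTrans A k) (hk : 2 ≤ k)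
    (hx : IsGeodesicOn A x 0 (k + 1)) : ddist A (x (k + 1)) (x 0) ≤ (k + 1 : ℕ) := by
  have hxk : A (x k) (x 0) :=
    hqt.adj_of_isGeodesicOn hk (hx.mono le_rfl (Nat.zero_le k) (by omega)) (by omega)
  exact ddist_le_of_le_of_le (hqt.ddist_last_le hk hx (by omega) (by omega))
    (ddist_le_one_of_adj hxk) le_rfl

theorem ddist_le_of_eq (hqt : KQuasiTrans A k) (hk : 2 ≤ k) (hx : IsGeodesicOn A x 0 (k + 1))
    (hy : IsGeodesicOn A y 0 m) {j : ℕ} (hj : 1 ≤ j) (hjk : j ≤ k + 1) (hjm : j ≤ m)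
    (h : x j = y j) : ddist A (x (k + 1)) (y m) ≤ m :=
  ddist_le_of_le_of_le (hqt.ddist_last_le hk hx hj hjk)
    (h ▸ hy.ddist_le (Nat.zero_le j) hjm le_rfl) (by omega)

theorem ddist_le_of_adj (hqt : KQuasiTrans A k) (hk : 2 ≤ k) (hx : IsGeodesicOn A x 0 (k + 1))
    (hy : IsGeodesicOn A y 0 m) {i j : ℕ} (hi : 1 ≤ i) (hik : i ≤ k + 1) (hjm : j ≤ m)
    (h : A (x i) (y j)) : ddist A (x (k + 1)) (y m) ≤ (i + 1 + (m - j) : ℕ) :=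
  ddist_le_of_le_of_le (ddist_le_of_le_of_le (hqt.ddist_last_le hk hx hi hik)
    (ddist_le_one_of_adj h) le_rfl) (hy.ddist_le (Nat.zero_le j) hjm le_rfl) le_rfl

theorem ddist_le_of_ddist_second_le (hqt : KQuasiTrans A k) (hk : 2 ≤ k)
    (hx : IsGeodesicOn A x 0 (k + 1)) (hy : IsGeodesicOn A y 0 m) (h0 : x 0 = y 0) (hm : 1 ≤ m)
    (h : ddist A (y 1) (x (k + 1)) ≤ k) : ddist A (x (k + 1)) (y m) ≤ m :=
  ddist_le_of_le_of_le (ddist_le_one_of_adj (hqt.adj_of_ddist_le hk hx (h0 ▸ hy.1 0 le_rfl hm) h))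
    (hy.ddist_le (Nat.zero_le 1) hm le_rfl) (by omega)

theorem ddist_le_of_adj_last (hqt : KQuasiTrans A k) (hk : 2 ≤ k)
    (hx : IsGeodesicOn A x 0 (k + 1)) (hy : IsGeodesicOn A y 0 m) (h0 : x 0 = y 0) {j : ℕ}
    (hj : 1 ≤ j) (hjk : j ≤ k) (hjm : j ≤ m) (h : A (y j) (x (k + 1))) :
    ddist A (x (k + 1)) (y m) ≤ m :=
  hqt.ddist_le_of_ddist_second_le hk hx hy h0 (by omega) <| ddist_le_of_le_of_le
    (hy.ddist_le (Nat.zero_le 1) hj hjm) (ddist_le_one_of_adj h) (by omega)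

theorem ddist_le_of_lt (hqt : KQuasiTrans A k) (hk : 2 ≤ k) (hx : IsGeodesicOn A x 0 (k + 1))
    (hy : IsGeodesicOn A y 0 m) (h0 : x 0 = y 0) (hm : 1 ≤ m) (hmk : m < k) :
    ddist A (x (k + 1)) (y m) ≤ (k + 1 : ℕ) := by
  have hxk : A (x k) (y 0) :=
    h0 ▸ hqt.adj_of_isGeodesicOn hk (hx.mono le_rfl (Nat.zero_le k) (by omega)) (by omega)
  rcases hqt (x (m + 1)) (y m) ((hx.mono (by omega) (by omega) (by omega)).hasPathN_append
      (hy.mono le_rfl (by omega) le_rfl) (by omega) (by omega) (by omega) hxk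
      fun i j _ _ _ _ h => by have := hx.index_eq_of_eq hy h0 (by omega) (by omega) h; omega)
    with h | h
  · exact (hqt.ddist_le_of_adj hk hx hy (by omega) (by omega) le_rfl h).trans
      (Nat.cast_le.2 (by omega))
  · refine (hqt.ddist_le_of_ddist_second_le hk hx hy h0 hm ?_).trans
      (Nat.cast_le.2 (by omega))
    exact ddist_le_of_le_of_le (ddist_le_of_le_of_le (hy.ddist_le (Nat.zero_le 1) hm le_rfl)
      (ddist_le_one_of_adj h) le_rfl) (hx.ddist_le (Nat.zero_le _) (by omega) le_rfl) (by omega)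

theorem ddist_le_of_le (hqt : KQuasiTrans A k) (hk : 3 ≤ k) (hx : IsGeodesicOn A x 0 (k + 1))
    (hy : IsGeodesicOn A y 0 m) (h0 : x 0 = y 0) (hkm : k ≤ m) (hmk : m ≤ k + 1)
    (hmeet : ∀ i j, i ≤ k + 1 → 0 < j → j ≤ m → x i ≠ y j) :
    ddist A (x (k + 1)) (y m) ≤ (k + 1 : ℕ) := by
  have hyk : A (y k) (x 0) :=
    h0 ▸ hqt.adj_of_isGeodesicOn (by omega) (hy.mono le_rfl (Nat.zero_le k) hkm) (by omega)
  rcases hqt (y k) (x (k - 1)) ((hy.mono (Nat.zero_le k) le_rfl hkm).hasPathN_append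
      (hx.mono le_rfl (Nat.zero_le _) (by omega)) le_rfl (Nat.zero_le _) (by omega) hyk
      fun j i _ _ _ _ h => hmeet i j (by omega) (by omega) (by omega) h.symm) with h | h
  · rcases hqt (y 3) (x (k + 1)) ((hy.mono (Nat.zero_le 3) (by omega) hkm).hasPathN_append
        (hx.mono (Nat.zero_le _) (by omega) le_rfl) (by omega) (by omega) (by omega) h
        fun j i _ _ _ _ h => hmeet i j (by omega) (by omega) (by omega) h.symm) with h | h
    · exact (hqt.ddist_le_of_adj_last (by omega) hx hy h0 (by omega) (by omega) (by omega) h).trans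
        (Nat.cast_le.2 hmk)
    · exact ddist_le_of_le_of_le (ddist_le_one_of_adj h)
        (hy.ddist_le (Nat.zero_le 3) (by omega) le_rfl) (by omega)
  · exact (hqt.ddist_le_of_adj (by omega) hx hy (by omega) (by omega) hkm h).trans
      (Nat.cast_le.2 (by omega))

theorem ddist_le_of_two_of_adj (hqt : KQuasiTrans A 2) (hx : IsGeodesicOn A x 0 3)
    (hy : IsGeodesicOn A y 0 3) (h0 : x 0 = y 0)
    (hmeet : ∀ i j, i ≤ 3 → 0 < j → j ≤ 3 → x i ≠ y j) (h : A (x 2) (y 2)) :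
    ddist A (x 3) (y 3) ≤ (3 : ℕ) := by
  rcases hqt (x 2) (y 3) ((hx.mono (Nat.zero_le 2) le_rfl (by omega)).hasPathN_append
      (hy.mono (Nat.zero_le 2) (by omega) le_rfl) le_rfl (by omega) rfl h
      fun i j _ _ _ _ => hmeet i j (by omega) (by omega) (by omega)) with h | h
  · exact hqt.ddist_le_of_adj le_rfl hx hy (by omega) (by omega) le_rfl h
  rcases hqt (y 3) (x 3) ((hy.mono (Nat.zero_le 3) le_rfl le_rfl).hasPathN_append
      (hx.mono (Nat.zero_le 2) (by omega) le_rfl) le_rfl (by omega) rfl h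
      fun j i _ _ _ _ h => hmeet i j (by omega) (by omega) (by omega) h.symm) with h | h
  · rcases hqt (y 2) (x 3) ((hy.mono (Nat.zero_le 2) (by omega) le_rfl).hasPathN_append
        (hx.mono (Nat.zero_le 3) le_rfl le_rfl) (by omega) le_rfl rfl h
        fun j i _ _ _ _ h => hmeet i j (by omega) (by omega) (by omega) h.symm) with h | h
    · exact (hqt.ddist_le_of_adj_last le_rfl hx hy h0 (by omega) le_rfl (by omega) h).trans
        (Nat.cast_le.2 (by omega))
    · exact ddist_le_of_le_of_le (ddist_le_one_of_adj h)
        (hy.ddist_le (Nat.zero_le 2) (by omega) le_rfl) (by omega)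
  · exact (ddist_le_one_of_adj h).trans (Nat.cast_le.2 (by omega))

theorem ddist_le_of_two (hqt : KQuasiTrans A 2) (hx : IsGeodesicOn A x 0 3)
    (hy : IsGeodesicOn A y 0 m) (h0 : x 0 = y 0) (hm : 2 ≤ m) (hm3 : m ≤ 3)
    (hmeet : ∀ i j, i ≤ 3 → 0 < j → j ≤ m → x i ≠ y j) :
    ddist A (x 3) (y m) ≤ (3 : ℕ) := by
  have hy₂ : A (y 2) (x 0) :=
    h0 ▸ hqt.adj_of_isGeodesicOn le_rfl (hy.mono le_rfl (by omega) hm) rfl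
  rcases hqt (y 2) (x 1) ((hy.mono (Nat.zero_le 2) le_rfl hm).hasPathN_append
      (hx.mono le_rfl (Nat.zero_le 1) (by omega)) le_rfl (Nat.zero_le 1) rfl hy₂
      fun j i _ _ _ _ h => hmeet i j (by omega) (by omega) (by omega) h.symm) with h | h
  swap
  · exact (hqt.ddist_le_of_adj le_rfl hx hy le_rfl (by omega) hm h).trans
      (Nat.cast_le.2 (by omega))
  rcases hqt (y 2) (x 2) ((hy.mono (Nat.zero_le 2) le_rfl hm).hasPathN_append
      (hx.mono (Nat.zero_le 1) (by omega) (by omega)) le_rfl (by omega) rfl h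
      fun j i _ _ _ _ h => hmeet i j (by omega) (by omega) (by omega) h.symm) with h | h
  · rcases hqt (y 2) (x 3) ((hy.mono (Nat.zero_le 2) le_rfl hm).hasPathN_append
        (hx.mono (Nat.zero_le 2) (by omega) le_rfl) le_rfl (by omega) rfl h
        fun j i _ _ _ _ h => hmeet i j (by omega) (by omega) (by omega) h.symm) with h | h
    · exact (hqt.ddist_le_of_adj_last le_rfl hx hy h0 (by omega) le_rfl hm h).trans
        (Nat.cast_le.2 hm3)
    · exact ddist_le_of_le_of_le (ddist_le_one_of_adj h)
        (hy.ddist_le (Nat.zero_le 2) hm le_rfl) (by omega)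
  obtain rfl | rfl : m = 2 ∨ m = 3 := by omega
  · exact hqt.ddist_le_of_adj le_rfl hx hy (by omega) (by omega) le_rfl h
  · exact hqt.ddist_le_of_two_of_adj hx hy h0 hmeet h

end KQuasiTrans

end

theorem kqt_king_propagation_general
    (A : V → V → Prop)
    (k : ℕ) (hk : 2 ≤ k) (hqt : KQuasiTrans A k)
    (u : V) (hu : IsRKing A (k + 1) u) :
    ∀ v : V, ddist A u v = ((k : ℕ∞) + 1) → IsRKing A (k + 1) v := by
  intro v huv w
  obtain ⟨x, hx, rfl, rfl⟩ := exists_isGeodesicOn (n := k + 1) (by exact_mod_cast huv)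
  obtain ⟨m, hmk, y, hy, h0, rfl⟩ := exists_isGeodesicOn_of_ddist_le (hu w)
  obtain rfl | hm := Nat.eq_zero_or_pos m
  · exact h0 ▸ hqt.ddist_last_first_le hk hx
  rcases lt_or_ge m k with hmk_lt | hkm
  · exact hqt.ddist_le_of_lt hk hx hy h0.symm hm hmk_lt
  by_cases hdiag : ∃ j, 1 ≤ j ∧ j ≤ k + 1 ∧ j ≤ m ∧ x j = y j
  · obtain ⟨j, hj, hjk, hjm, h⟩ := hdiag
    exact (hqt.ddist_le_of_eq hk hx hy hj hjk hjm h).trans (Nat.cast_le.2 hmk)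
  have hmeet : ∀ i j, i ≤ k + 1 → 0 < j → j ≤ m → x i ≠ y j := by
    intro i j hi hj hjm h
    obtain rfl := hx.index_eq_of_eq hy h0.symm hi hjm h
    exact hdiag ⟨i, hj, hi, hjm, h⟩
  obtain rfl | hk3 := eq_or_lt_of_le hk
  · exact hqt.ddist_le_of_two hx hy h0.symm hkm hmk hmeet
  · exact hqt.ddist_le_of_le hk3 hx hy h0.symm hkm hmk hmeet

/-- `k ≥ 2`; if `u` is a `(k+1)`-king, then every vertex at distance `k+1`
from `u` is also a `(k+1)`-king. -/
theorem kqt_king_propagation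
    [Fintype V] (A : V → V → Prop) (hloop : ∀ v : V, ¬ A v v)
    (k : ℕ) (hk : 2 ≤ k) (hqt : KQuasiTrans A k)
    (u : V) (hu : IsRKing A (k + 1) u) :
    ∀ v : V, ddist A u v = ((k : ℕ∞) + 1) → IsRKing A (k + 1) v :=
  kqt_king_propagation_general A k hk hqt u hu
end

section
/- Let k ≥ 2 be an even integer and let D be a k-quasi-transitive digraph. If P = (u_0, u_1, …, u_{k+1}, u_{k+2}) is a directed path in D of minimum length from u_0 to u_{k+2}, i.e., d(u_0,u_{k+2}) = k+2, then (u_{k+2}, u_{k−i}) ∈ A(D) for every i with 0 ≤ i ≤ k. -/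
variable {V : Type*}

/-!
A shortest path `u 0, …, u (k + 2)` has no forward chords `u a → u b` with `b ≥ a + 2`,
so whenever `k`-quasi-transitivity is applied to a `k`-path between `u a` and `u b` built
from vertices of the path, it produces the backward arc `u b → u a`. The segments give
`u k → u 0` and `u (k + 2) → u 2`; the path `u (k + 2), u (j + 2), …, u k, u 0, …, u j`
turns `u (k + 2) → u (j + 2)` into `u (k + 2) → u j`, and the path
`u (k + 2), u a, …, u (a + k - 1)` turns `u (k + 2) → u a` into `u (k + 2) → u (a + k - 1)`.
Descending by two from `u 2` reaches `u 0`; jumping to `u (k - 1)` and descending reaches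
every odd index down to `u 1` (this is where `k` is even); jumping to `u k` and descending
reaches every even index.
-/

lemma hasPathN_of_isChain {A : V → V → Prop} {l : List V} (hl : l ≠ []) (hnd : l.Nodup)
    (hc : l.IsChain A) : HasPathN A (l.head hl) (l.getLast hl) (l.length - 1) := by
  have hlen : l.length - 1 + 1 = l.length := Nat.sub_add_cancel (List.length_pos_iff.mpr hl)
  refine ⟨fun i => l[i.val], fun i j hij => Fin.ext ?_, ?_, ?_, fun i => ?_⟩
  · exact (hnd.getElem_inj_iff).mp hij
  · simp [List.head_eq_getElem]
  · simp [List.getLast_eq_getElem]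
  · exact hc.getElem i.val (by omega)

lemma ddist_le_of_hasPathN_s17 {A : V → V → Prop} {u v : V} {m : ℕ} (h : HasPathN A u v m) :
    ddist A u v ≤ m :=
  sInf_le ⟨m, rfl, h⟩

/-- `u 0, u 1, …, u n` is a shortest path from `u 0` to `u n`. -/
structure IsGeodesic (A : V → V → Prop) (u : ℕ → V) (n : ℕ) : Prop where
  injOn : Set.InjOn u (Set.Iic n)
  adj : ∀ i < n, A (u i) (u (i + 1))
  ddist_eq : ddist A (u 0) (u n) = n

namespace IsGeodesic

variable {A : V → V → Prop} {u : ℕ → V} {n : ℕ}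

lemma hasPathN_of_isChain (hG : IsGeodesic A u n) {l : List ℕ} (hl : l ≠ []) (hnd : l.Nodup)
    (hle : ∀ i ∈ l, i ≤ n) (hc : l.IsChain fun i j => A (u i) (u j)) :
    HasPathN A (u (l.head hl)) (u (l.getLast hl)) (l.length - 1) := by
  have hnd' : (l.map u).Nodup := hnd.map_on fun i hi j hj => hG.injOn (hle i hi) (hle j hj)
  have hp := _root_.hasPathN_of_isChain (by simpa using hl) hnd' ((List.isChain_map u).mpr hc)
  rwa [List.head_map, List.getLast_map, List.length_map] at hp

lemma isChain_range' (hG : IsGeodesic A u n) {a m : ℕ} (h : a + m ≤ n + 1) :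
    (List.range' a m).IsChain fun i j => A (u i) (u j) := by
  refine List.isChain_iff_getElem.mpr fun i hi => ?_
  simp only [List.length_range'] at hi
  simpa [Nat.add_assoc] using hG.adj (a + i) (by omega)

lemma not_adj (hG : IsGeodesic A u n) {a b : ℕ} (hab : a + 2 ≤ b) (hb : b ≤ n) :
    ¬ A (u a) (u b) := by
  intro h
  have hne : List.range' b (n + 1 - b) ≠ [] := by simp; omega
  have hp := hG.hasPathN_of_isChain (l := List.range' 0 (a + 1) ++ List.range' b (n + 1 - b))
    (by simp) ?_ ?_ ?_
  · have := ddist_le_of_hasPathN_s17 hp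
    rw [List.head_append_left (by simp), List.head_range', List.getLast_append_of_ne_nil _ hne,
      List.getLast_range', show b + (n + 1 - b) - 1 = n by omega, hG.ddist_eq] at this
    simp only [List.length_append, List.length_range', Nat.cast_le] at this
    omega
  · refine List.nodup_append.mpr ⟨List.nodup_range', List.nodup_range', ?_⟩
    simp only [List.mem_range'_1]
    omega
  · simp only [List.mem_append, List.mem_range'_1]
    omega
  · refine (hG.isChain_range' (by omega)).append (hG.isChain_range' (by omega)) ?_
    simp [List.getLast?_range', List.head?_range', show n + 1 - b ≠ 0 by omega, h]

lemma adj_of_hasPathN (hG : IsGeodesic A u n) {k : ℕ} (hqt : KQuasiTrans A k) {a b : ℕ}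
    (hab : a + 2 ≤ b) (hb : b ≤ n) (hp : HasPathN A (u b) (u a) k) : A (u b) (u a) :=
  (hqt _ _ hp).resolve_right (hG.not_adj hab hb)

lemma adj_add_of_kQuasiTrans (hG : IsGeodesic A u n) {k : ℕ} (hqt : KQuasiTrans A k)
    (hk : 2 ≤ k) {a : ℕ} (ha : a + k ≤ n) : A (u (a + k)) (u a) := by
  have hp := hG.hasPathN_of_isChain (l := List.range' a (k + 1)) (by simp) List.nodup_range'
    (by simp only [List.mem_range'_1]; omega) (hG.isChain_range' (by omega))
  rw [List.head_range', List.getLast_range', List.length_range', Nat.add_sub_cancel,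
    show a + (k + 1) - 1 = a + k by omega] at hp
  exact (hqt _ _ hp).resolve_left (hG.not_adj (by omega) ha)

variable {k : ℕ}

lemma adj_last_of_adj_last_add_two (hG : IsGeodesic A u (k + 2)) (hqt : KQuasiTrans A k)
    (hk : 2 ≤ k) {j : ℕ} (hj : j + 2 ≤ k) (h : A (u (k + 2)) (u (j + 2))) :
    A (u (k + 2)) (u j) := by
  have hwrap : A (u (0 + k)) (u 0) := hG.adj_add_of_kQuasiTrans hqt hk (by omega)
  have hne : List.range' 0 (j + 1) ≠ [] := by simp
  have hp := hG.hasPathN_of_isChain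
    (l := (k + 2) :: (List.range' (j + 2) (k - j - 1) ++ List.range' 0 (j + 1))) (by simp) ?_ ?_ ?_
  · rw [List.head_cons, List.getLast_cons (by simp), List.getLast_append_of_ne_nil _ hne,
      List.getLast_range'] at hp
    simp only [List.length_cons, List.length_append, List.length_range'] at hp
    rw [show 0 + (j + 1) - 1 = j by omega, show k - j - 1 + (j + 1) + 1 - 1 = k by omega] at hp
    exact hG.adj_of_hasPathN hqt (by omega) le_rfl hp
  · simp only [List.nodup_cons, List.nodup_append, List.mem_append, List.mem_range'_1]
    refine ⟨by omega, List.nodup_range', List.nodup_range', ?_⟩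
    omega
  · simp only [List.mem_cons, List.mem_append, List.mem_range'_1]
    omega
  · refine ((hG.isChain_range' (by omega)).append (hG.isChain_range' (by omega)) ?_).cons ?_
    · simpa [List.getLast?_range', List.head?_range', show k - j - 1 ≠ 0 by omega,
        show j + 2 + (k - j - 1) - 1 = 0 + k by omega] using hwrap
    · simpa [List.head?_append, List.head?_range', show k - j - 1 ≠ 0 by omega] using h

lemma adj_last_add_sub_one_of_adj_last (hG : IsGeodesic A u (k + 2)) (hqt : KQuasiTrans A k)
    (hk : 1 ≤ k) {a : ℕ} (ha : a ≤ 1) (h : A (u (k + 2)) (u a)) :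
    A (u (k + 2)) (u (a + k - 1)) := by
  have hp := hG.hasPathN_of_isChain (l := (k + 2) :: List.range' a k) (by simp) ?_ ?_ ?_
  · rw [List.head_cons, List.getLast_cons (by simp; omega), List.getLast_range'] at hp
    simp only [List.length_cons, List.length_range', Nat.add_sub_cancel] at hp
    exact hG.adj_of_hasPathN hqt (by omega) le_rfl hp
  · simp only [List.nodup_cons, List.mem_range'_1]
    exact ⟨by omega, List.nodup_range'⟩
  · simp only [List.mem_cons, List.mem_range'_1]
    omega
  · refine (hG.isChain_range' (by omega)).cons ?_
    simpa [List.head?_range', show k ≠ 0 by omega] using h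

lemma adj_last_of_adj_last_add_two_mul (hG : IsGeodesic A u (k + 2)) (hqt : KQuasiTrans A k)
    (hk : 2 ≤ k) {i : ℕ} : ∀ {t : ℕ}, i + 2 * t ≤ k → A (u (k + 2)) (u (i + 2 * t)) →
      A (u (k + 2)) (u i)
  | 0, _, h => h
  | t + 1, hle, h => adj_last_of_adj_last_add_two_mul hG hqt hk (t := t) (by omega)
      (hG.adj_last_of_adj_last_add_two hqt hk (by omega)
        (by rwa [show i + 2 * t + 2 = i + 2 * (t + 1) by omega]))

end IsGeodesic

lemma isGeodesic_comp_clamp {A : V → V → Prop} {n : ℕ} {f : Fin (n + 1) → V}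
    (hinj : Function.Injective f) (harc : ∀ i : Fin n, A (f i.castSucc) (f i.succ))
    (hdist : ddist A (f 0) (f (Fin.last n)) = n) :
    IsGeodesic A (fun t => f (Fin.clamp t n)) n where
  injOn i hi j hj hij := by
    have := congrArg Fin.val (hinj hij)
    simp only [Fin.coe_clamp] at this
    simp only [Set.mem_Iic] at hi hj
    omega
  adj i hi := by
    convert harc ⟨i, hi⟩ using 3 <;> ext <;> simp <;> omega
  ddist_eq := by
    convert hdist using 3 <;> ext <;> simp

/-- even `k ≥ 2`; if `(u_0, …, u_{k+2})` is a shortest path (so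
`d(u_0, u_{k+2}) = k+2`), then `u_{k+2} → u_{k−i}` for every `0 ≤ i ≤ k`. -/
theorem kqt_even_last_dominates
    (A : V → V → Prop)
    (k : ℕ) (hk : 2 ≤ k) (hke : Even k) (hqt : KQuasiTrans A k)
    (f : Fin (k + 3) → V) (hinj : Function.Injective f)
    (harc : ∀ i : Fin (k + 2), A (f i.castSucc) (f i.succ))
    (hdist : ddist A (f 0) (f (Fin.last (k + 2))) = ((k : ℕ∞) + 2)) :
    ∀ i : ℕ, ∀ _ : i ≤ k,
      A (f (Fin.last (k + 2))) (f ⟨k - i, by omega⟩) := by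
  set u : ℕ → V := fun t => f (Fin.clamp t (k + 2))
  have hG : IsGeodesic A u (k + 2) := isGeodesic_comp_clamp hinj harc (by exact_mod_cast hdist)
  have h2 : A (u (k + 2)) (u 2) := by
    simpa [add_comm] using hG.adj_add_of_kQuasiTrans hqt hk (a := 2) (by omega)
  have h0 : A (u (k + 2)) (u 0) := hG.adj_last_of_adj_last_add_two hqt hk hk h2
  have hpred : A (u (k + 2)) (u (0 + k - 1)) :=
    hG.adj_last_add_sub_one_of_adj_last hqt (by omega) zero_le_one h0
  obtain ⟨c, hc⟩ := hke
  have h1 : A (u (k + 2)) (u 1) :=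
    hG.adj_last_of_adj_last_add_two_mul hqt hk (t := c - 1) (by omega)
      (by rwa [show 1 + 2 * (c - 1) = 0 + k - 1 by omega])
  have hk' : A (u (k + 2)) (u (1 + k - 1)) :=
    hG.adj_last_add_sub_one_of_adj_last hqt (by omega) le_rfl h1
  intro i hi
  have key : A (u (k + 2)) (u (k - i)) := by
    obtain ⟨t, rfl | rfl⟩ := Nat.even_or_odd' i
    · exact hG.adj_last_of_adj_last_add_two_mul hqt hk (t := t) (by omega)
        (by rwa [show k - 2 * t + 2 * t = 1 + k - 1 by omega])
    · exact hG.adj_last_of_adj_last_add_two_mul hqt hk (t := t) (by omega)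
        (by rwa [show k - (2 * t + 1) + 2 * t = 0 + k - 1 by omega])
  convert key using 2 <;> ext <;> simp
  omega
end
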